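/- Let C be a self-dual Z/2kZ-code of length n and let A_{2k}(C) = (1/sqrt(2k)) (rho(C) + 2k Z^n) be the Construction A lattice, viewed as the set of vectors v in R^n such that sqrt(2k)·v has integer entries congruent modulo 2k to some codeword of C (under rho). Then A_{2k}(C) is unimodular: it equals its dual lattice with respect to the standard inner product. -/

import Mathlib

/-!
Writing the vectors of `A_{2k}(C)` as `a / √(2k)` with `a ∈ ℤⁿ`, membership says exactly that
`a mod 2k ∈ C`, and the inner product of `a / √(2k)` and `b / √(2k)` is `⟨a, b⟩ / 2k`, an integer
iff `⟨a mod 2k, b mod 2k⟩ = 0` in `ℤ/2kℤ`. So `A_{2k}(C) ⊆ A_{2k}(C)^*` is `C ⊆ C^⊥`. Conversely,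
pairing a dual vector `x` with `√(2k) eᵢ ∈ A_{2k}(C)` shows `x = a / √(2k)` for some `a ∈ ℤⁿ`, and
pairing it with `ρ(c) / √(2k)` for `c ∈ C` shows `a mod 2k ∈ C^⊥ = C`.
-/

/-- The signed representative map `ρ : ℤ/2kℤ → ℤ`. -/
def signedRep (k : ℕ) (a : ZMod (2 * k)) : ℤ :=
  if a.val ≤ k then (a.val : ℤ) else (a.val : ℤ) - 2 * k

/-- The Construction A lattice `A_{2k}(C) = (1/√(2k))(ρ(C) + 2kℤⁿ)`. -/
def constructionA (k n : ℕ) (C : Submodule (ZMod (2 * k)) (Fin n → ZMod (2 * k))) :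
    Set (Fin n → ℝ) :=
  {v | ∃ c ∈ C, ∃ z : Fin n → ℤ,
    v = fun i => ((signedRep k (c i) : ℝ) + 2 * k * z i) / Real.sqrt (2 * k)}

/-- The dual lattice of a subset of `ℝⁿ` (with the standard inner product). -/
def dualLattice (n : ℕ) (L : Set (Fin n → ℝ)) : Set (Fin n → ℝ) :=
  {x | ∀ y ∈ L, ∃ m : ℤ, ∑ i, x i * y i = m}

noncomputable def scaledIntVec (k : ℕ) {n : ℕ} (a : Fin n → ℤ) : Fin n → ℝ :=
  fun i => (a i : ℝ) / Real.sqrt (2 * k)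

theorem exists_intCast_eq_intCast_div_iff {N : ℕ} (hN : N ≠ 0) (t : ℤ) :
    (∃ m : ℤ, (t : ℝ) / N = m) ↔ (t : ZMod N) = 0 := by
  rw [ZMod.intCast_zmod_eq_zero_iff_dvd]
  constructor
  · rintro ⟨m, hm⟩
    refine ⟨m, ?_⟩
    rw [div_eq_iff (by exact_mod_cast hN)] at hm
    exact_mod_cast hm.trans (mul_comm _ _)
  · rintro ⟨m, rfl⟩
    exact ⟨m, by push_cast; field_simp⟩

theorem sum_scaledIntVec_mul (k : ℕ) {n : ℕ} (a b : Fin n → ℤ) :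
    ∑ i, scaledIntVec k a i * scaledIntVec k b i = ((∑ i, a i * b i : ℤ) : ℝ) / (2 * k : ℕ) := by
  simp only [scaledIntVec, div_mul_div_comm, ← Finset.sum_div,
    Real.mul_self_sqrt (by positivity : (0 : ℝ) ≤ 2 * k)]
  push_cast
  rfl

section

variable {k : ℕ} [NeZero k]

theorem intCast_signedRep (a : ZMod (2 * k)) : ((signedRep k a : ℤ) : ZMod (2 * k)) = a := by
  have h2k : ((2 * k : ℕ) : ZMod (2 * k)) = 0 := ZMod.natCast_self _
  unfold signedRep
  split_ifs <;> push_cast at h2k ⊢ <;> simp [h2k]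

theorem exists_int_sum_scaledIntVec_mul_iff {n : ℕ} (a b : Fin n → ℤ) :
    (∃ m : ℤ, ∑ i, scaledIntVec k a i * scaledIntVec k b i = m) ↔
      ∑ i, (a i : ZMod (2 * k)) * b i = 0 := by
  rw [sum_scaledIntVec_mul, exists_intCast_eq_intCast_div_iff (NeZero.ne _)]
  push_cast
  rfl

theorem mem_constructionA_iff {n : ℕ} {C : Submodule (ZMod (2 * k)) (Fin n → ZMod (2 * k))}
    {v : Fin n → ℝ} :
    v ∈ constructionA k n C ↔
      ∃ a : Fin n → ℤ, (fun i => (a i : ZMod (2 * k))) ∈ C ∧ v = scaledIntVec k a := by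
  constructor
  · rintro ⟨c, hc, z, rfl⟩
    refine ⟨fun i => signedRep k (c i) + 2 * k * z i, ?_, by ext; simp [scaledIntVec]⟩
    have h2k : ((2 * k : ℕ) : ZMod (2 * k)) = 0 := ZMod.natCast_self _
    push_cast at h2k ⊢
    simpa [intCast_signedRep, h2k] using hc
  · rintro ⟨a, ha, rfl⟩
    have hdvd (i : Fin n) : ((2 * k : ℕ) : ℤ) ∣ a i - signedRep k (a i) := by
      rw [← ZMod.intCast_zmod_eq_zero_iff_dvd]
      push_cast
      rw [intCast_signedRep, sub_self]
    choose z hz using hdvd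
    refine ⟨_, ha, z, funext fun i => ?_⟩
    have hzR := congrArg (Int.cast : ℤ → ℝ) (hz i)
    push_cast at hzR
    simp only [scaledIntVec, ← hzR, add_sub_cancel]

theorem single_sqrt_mem_constructionA {n : ℕ}
    (C : Submodule (ZMod (2 * k)) (Fin n → ZMod (2 * k))) (i : Fin n) :
    Pi.single i (Real.sqrt (2 * k)) ∈ constructionA k n C := by
  refine mem_constructionA_iff.2 ⟨Pi.single i (2 * k), ?_, ?_⟩
  · convert C.zero_mem using 1
    funext j
    rcases eq_or_ne j i with rfl | hji
    · rw [Pi.single_eq_same, Pi.zero_apply]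
      exact_mod_cast ZMod.natCast_self (2 * k)
    · simp [hji]
  · funext j
    rcases eq_or_ne j i with rfl | hji
    · simp only [scaledIntVec, Pi.single_eq_same]
      push_cast
      rw [Real.div_sqrt]
    · simp [scaledIntVec, hji]

theorem exists_scaledIntVec_eq_of_mem_dualLattice {n : ℕ}
    {C : Submodule (ZMod (2 * k)) (Fin n → ZMod (2 * k))} {x : Fin n → ℝ}
    (hx : x ∈ dualLattice n (constructionA k n C)) : ∃ a : Fin n → ℤ, x = scaledIntVec k a := by
  have hk : (0 : ℝ) < k := by exact_mod_cast Nat.pos_of_neZero k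
  have hs : Real.sqrt (2 * k) ≠ 0 := Real.sqrt_ne_zero'.2 (by positivity)
  have hcoord (i : Fin n) : ∃ m : ℤ, x i * Real.sqrt (2 * k) = m := by
    simpa [Pi.single_apply] using hx _ (single_sqrt_mem_constructionA C i)
  choose a ha using hcoord
  exact ⟨a, funext fun i => eq_div_of_mul_eq hs (ha i)⟩

end

theorem constructionA_unimodular
    (k n : ℕ) (hk : 0 < k)
    (C : Submodule (ZMod (2 * k)) (Fin n → ZMod (2 * k)))
    (hself : ∀ x : Fin n → ZMod (2 * k),
      x ∈ C ↔ ∀ y ∈ C, ∑ i, x i * y i = 0) :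
    constructionA k n C = dualLattice n (constructionA k n C) := by
  have : NeZero k := ⟨hk.ne'⟩
  ext x
  constructor
  · rw [mem_constructionA_iff]
    rintro ⟨a, ha, rfl⟩ y hy
    obtain ⟨b, hb, rfl⟩ := mem_constructionA_iff.1 hy
    exact (exists_int_sum_scaledIntVec_mul_iff a b).2 ((hself _).1 ha _ hb)
  · intro hx
    obtain ⟨a, rfl⟩ := exists_scaledIntVec_eq_of_mem_dualLattice hx
    refine mem_constructionA_iff.2 ⟨a, (hself _).2 fun c hc => ?_, rfl⟩
    have hrep : scaledIntVec k (fun i => signedRep k (c i)) ∈ constructionA k n C :=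
      mem_constructionA_iff.2 ⟨_, by simpa only [intCast_signedRep] using hc, rfl⟩
    simpa only [exists_int_sum_scaledIntVec_mul_iff, intCast_signedRep] using hx _ hrep
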